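/- The symplectic group Sp₄(F₂) has order 720, and the homomorphism S₆ → Sp₄(F₂) induced from the permutation action on the quotient Z = U⁰/L of F₂⁶ is an isomorphism. -/

import Mathlib

open scoped BigOperators

/-- The trace-zero hyperplane `U⁰ ⊂ U = F₂⁶` for the standard bilinear form. -/
def U0 : Submodule (ZMod 2) (Fin 6 → ZMod 2) where
  carrier := {x | ∑ i, x i = 0}
  add_mem' := by
    intro a b ha hb
    simp only [Set.mem_setOf_eq, Pi.add_apply, Finset.sum_add_distrib] at *
    simp [ha, hb]
  zero_mem' := by simp
  smul_mem' := by
    intro c x hx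
    simp only [Set.mem_setOf_eq, Pi.smul_apply, smul_eq_mul, ← Finset.mul_sum] at *
    simp [hx]

lemma mem_U0 {x : Fin 6 → ZMod 2} : x ∈ U0 ↔ ∑ i, x i = 0 := Iff.rfl

/-- The all-ones vector `(1,1,1,1,1,1)`, an element of `U⁰`. -/
def allOnes : U0 := ⟨fun _ => 1, by rw [mem_U0]; decide⟩

/-- The line `L` spanned by the all-ones vector. -/
def Lsub : Submodule (ZMod 2) U0 := Submodule.span (ZMod 2) {allOnes}

/-- The quotient `Z = U⁰/L`. -/
abbrev Zq := U0 ⧸ Lsub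

lemma perm_mem (g : Equiv.Perm (Fin 6)) {x : Fin 6 → ZMod 2} (hx : x ∈ U0) :
    (fun i => x (g⁻¹ i)) ∈ U0 := by
  rw [mem_U0] at hx ⊢
  rw [Equiv.sum_comp g⁻¹ x]
  exact hx


/-!
The permutation action of `S₆` on `Z = U⁰/L` preserves the form induced by the dot product.
It is faithful: two weight-two vectors of `F₂⁶` differ by the all-ones vector only if they are
equal, so a permutation fixing every class `[e_a + e_b]` fixes every pair `{a, b}`, hence every
point. The classes `[e₀+e₁], [e₃+e₄], [e₁+e₂], [e₄+e₅]` form a basis of `Z` with Gram matrix `J`,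
so the isometries of `Z` embed into `Sp₄(F₂)`. A matrix is symplectic iff its rows form a
symplectic frame, and there are `15·8·3·2 = 720` frames; hence the injective image of `S₆` is the
whole isometry group.
-/

open Matrix

namespace Matrix

variable {l R : Type*} [Fintype l] [DecidableEq l] [CommRing R]

lemma dotProduct_J_mulVec (v w : l ⊕ l → R) :
    v ⬝ᵥ (J l R *ᵥ w) = ∑ i, (v (.inr i) * w (.inl i) - v (.inl i) * w (.inr i)) := by
  simp [J, fromBlocks_mulVec, dotProduct, Fintype.sum_sum_type, neg_mulVec,
    Finset.sum_add_distrib, sub_eq_add_neg, add_comm]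

lemma dotProduct_J_mulVec_self (v : l ⊕ l → R) : v ⬝ᵥ (J l R *ᵥ v) = 0 := by
  simp [dotProduct_J_mulVec, mul_comm]

lemma dotProduct_J_mulVec_comm (v w : l ⊕ l → R) :
    v ⬝ᵥ (J l R *ᵥ w) = -(w ⬝ᵥ (J l R *ᵥ v)) := by
  simp only [dotProduct_J_mulVec, ← Finset.sum_neg_distrib, neg_sub, mul_comm]

lemma dotProduct_J_mulVec_comm_of_charTwo [CharP R 2] (v w : l ⊕ l → R) :
    v ⬝ᵥ (J l R *ᵥ w) = w ⬝ᵥ (J l R *ᵥ v) := by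
  rw [dotProduct_J_mulVec_comm, CharTwo.neg_eq]

lemma mem_symplecticGroup_iff_rows {A : Matrix (l ⊕ l) (l ⊕ l) R} :
    A ∈ symplecticGroup l R ↔ ∀ i j, A i ⬝ᵥ (J l R *ᵥ A j) = J l R i j := by
  simp only [SymplecticGroup.mem_iff, ← Matrix.ext_iff, mul_apply', dotProduct_mulVec]
  rfl

end Matrix

section Isometries

variable {l R M : Type*} [Fintype l] [DecidableEq l] [CommRing R] [AddCommGroup M] [Module R M]
  {b : Module.Basis (l ⊕ l) R M} {B : LinearMap.BilinForm R M}

lemma LinearMap.IsOrthogonal.toMatrix_mem_symplecticGroup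
    (hB : LinearMap.toMatrix₂ b b B = J l R) {f : M →ₗ[R] M} (hf : B.IsOrthogonal f) :
    LinearMap.toMatrix b b f ∈ symplecticGroup l R := by
  have hBf : B.compl₁₂ f f = B := LinearMap.ext₂ hf
  rw [SymplecticGroup.mem_iff', ← hB, ← LinearMap.toMatrix₂_compl₁₂, hBf]

lemma card_isOrthogonal_le_card_symplecticGroup [Finite R]
    (hB : LinearMap.toMatrix₂ b b B = J l R) :
    Nat.card {f : M ≃ₗ[R] M | B.IsOrthogonal f} ≤ Nat.card (symplecticGroup l R) :=
  Nat.card_le_card_of_injective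
    (fun f => ⟨LinearMap.toMatrix b b f.1,
      LinearMap.IsOrthogonal.toMatrix_mem_symplecticGroup hB f.2⟩)
    fun _ _ hfg => Subtype.ext <| LinearEquiv.toLinearMap_injective <|
      (LinearMap.toMatrix b b).injective (congrArg Subtype.val hfg)

end Isometries

section SymplecticFourTwo

local notation "V" => Fin 2 ⊕ Fin 2 → ZMod 2
local notation "⟪" r ", " s "⟫ₛ" => r ⬝ᵥ (J (Fin 2) (ZMod 2) *ᵥ s)

def IsSymplecticFrame (t : V × V × V × V) : Prop :=
  ⟪t.1, t.2.1⟫ₛ = 1 ∧ (⟪t.1, t.2.2.1⟫ₛ = 0 ∧ ⟪t.2.1, t.2.2.1⟫ₛ = 0) ∧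
    (⟪t.2.2.1, t.2.2.2⟫ₛ = 1 ∧ ⟪t.1, t.2.2.2⟫ₛ = 0 ∧ ⟪t.2.1, t.2.2.2⟫ₛ = 0)

instance : DecidablePred IsSymplecticFrame := fun _ => by unfold IsSymplecticFrame; infer_instance

-- Nesting the conditions as `if`s outside the inner sums prunes the enumeration from `16⁴`
-- tuples to a few thousand.
lemma card_isSymplecticFrame : Fintype.card {t // IsSymplecticFrame t} = 720 := by
  rw [Fintype.card_subtype, Finset.card_filter]
  simp only [Fintype.sum_prod_type, IsSymplecticFrame, ite_and, Finset.sum_ite_irrel,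
    Finset.sum_const_zero]
  decide +kernel

def matrixEquivRows {R : Type*} :
    Matrix (Fin 2 ⊕ Fin 2) (Fin 2 ⊕ Fin 2) R ≃
      (Fin 2 ⊕ Fin 2 → R) × (Fin 2 ⊕ Fin 2 → R) × (Fin 2 ⊕ Fin 2 → R) × (Fin 2 ⊕ Fin 2 → R) where
  toFun A := (A (.inl 0), A (.inr 0), A (.inl 1), A (.inr 1))
  invFun t := Matrix.of (Sum.elim ![t.1, t.2.2.1] ![t.2.1, t.2.2.2])
  left_inv A := by
    ext i : 1
    rcases i with i | i <;> fin_cases i <;> rfl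
  right_inv _ := rfl

lemma mem_symplecticGroup_iff_isSymplecticFrame
    (A : Matrix (Fin 2 ⊕ Fin 2) (Fin 2 ⊕ Fin 2) (ZMod 2)) :
    A ∈ symplecticGroup (Fin 2) (ZMod 2) ↔
      IsSymplecticFrame (A (.inl 0), A (.inr 0), A (.inl 1), A (.inr 1)) := by
  rw [mem_symplecticGroup_iff_rows]
  constructor
  · intro h
    refine ⟨?_, ⟨?_, ?_⟩, ?_, ?_, ?_⟩
    · simpa [J] using h (.inl 0) (.inr 0)
    · simpa [J] using h (.inl 0) (.inl 1)
    · simpa [J] using h (.inr 0) (.inl 1)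
    · simpa [J] using h (.inl 1) (.inr 1)
    · simpa [J] using h (.inl 0) (.inr 1)
    · simpa [J] using h (.inr 0) (.inr 1)
  · rintro ⟨h₁, ⟨h₂, h₃⟩, h₄, h₅, h₆⟩
    dsimp only at h₁ h₂ h₃ h₄ h₅ h₆
    have h₁' := (dotProduct_J_mulVec_comm_of_charTwo _ _).trans h₁
    have h₂' := (dotProduct_J_mulVec_comm_of_charTwo _ _).trans h₂
    have h₃' := (dotProduct_J_mulVec_comm_of_charTwo _ _).trans h₃
    have h₄' := (dotProduct_J_mulVec_comm_of_charTwo _ _).trans h₄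
    have h₅' := (dotProduct_J_mulVec_comm_of_charTwo _ _).trans h₅
    have h₆' := (dotProduct_J_mulVec_comm_of_charTwo _ _).trans h₆
    simp only [Sum.forall, Fin.forall_fin_two, dotProduct_J_mulVec_self,
      h₁, h₂, h₃, h₄, h₅, h₆, h₁', h₂', h₃', h₄', h₅', h₆']
    decide

theorem card_symplecticGroup_fin_two_zmod_two :
    Nat.card (symplecticGroup (Fin 2) (ZMod 2)) = 720 := by
  rw [Nat.card_congr (matrixEquivRows.subtypeEquiv mem_symplecticGroup_iff_isSymplecticFrame),
    Nat.card_eq_fintype_card, card_isSymplecticFrame]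

end SymplecticFourTwo

def pairVec {α : Type*} [DecidableEq α] (a b : α) : α → ZMod 2 := Pi.single a 1 + Pi.single b 1

lemma pairVec_comp_perm {α : Type*} [DecidableEq α] (g : Equiv.Perm α) (a b : α) :
    (fun i => pairVec a b (g⁻¹ i)) = pairVec (g a) (g b) := by
  ext i
  simp [pairVec, Pi.single_apply, Equiv.symm_apply_eq]

lemma pairVec_mem_U0 (a b : Fin 6) : pairVec a b ∈ U0 := by
  rw [mem_U0]
  simp [pairVec, Finset.sum_add_distrib]
  decide

def pairClass (a b : Fin 6) : Zq := Submodule.Quotient.mk ⟨pairVec a b, pairVec_mem_U0 a b⟩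

lemma exists_const_sub_of_mk_eq {x y : U0}
    (h : (Submodule.Quotient.mk x : Zq) = Submodule.Quotient.mk y) :
    ∃ c, ∀ i, (x : Fin 6 → ZMod 2) i - (y : Fin 6 → ZMod 2) i = c := by
  rw [Submodule.Quotient.eq, Lsub, Submodule.mem_span_singleton] at h
  obtain ⟨c, hc⟩ := h
  exact ⟨c, fun i => by simpa [allOnes] using (congrFun (congrArg Subtype.val hc) i).symm⟩

-- `pairVec c d - pairVec a b` is `1` at `c` but `0` at any `k ∉ {a, b, c, d}`: it is not constant.
lemma eq_or_eq_of_pairClass_eq {a b c d : Fin 6} (hcd : c ≠ d)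
    (h : pairClass c d = pairClass a b) : c = a ∨ c = b := by
  by_contra! hc
  obtain ⟨k, -, hk⟩ := Finset.exists_mem_notMem_of_card_lt_card
    (s := {a, b, c, d}) (t := Finset.univ) (Finset.card_le_four.trans_lt (by decide))
  simp only [Finset.mem_insert, Finset.mem_singleton, not_or] at hk
  obtain ⟨e, he⟩ := exists_const_sub_of_mk_eq h
  have := (he c).trans (he k).symm
  simp [pairVec, hc.1, hc.2, hcd, hk.1, hk.2.1, hk.2.2.1, hk.2.2.2] at this

lemma eq_one_of_forall_pairClass_eq (g : Equiv.Perm (Fin 6))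
    (hg : ∀ a b, pairClass (g a) (g b) = pairClass a b) : g = 1 := by
  refine Equiv.ext fun a => ?_
  have hne : a + 1 ≠ a ∧ a + 2 ≠ a ∧ a + 1 ≠ a + 2 := by revert a; decide
  have key : ∀ b, b ≠ a → g a = a ∨ g a = b := fun b hb =>
    eq_or_eq_of_pairClass_eq (g.injective.ne hb.symm) (hg a b)
  rcases key _ hne.1 with h | h₁
  · exact h
  rcases key _ hne.2.1 with h | h₂
  · exact h
  exact absurd (h₁.symm.trans h₂) hne.2.2

instance : DecidablePred (· ∈ U0) := fun _ => decidable_of_iff _ mem_U0.symm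

instance : DecidablePred (· ∈ Lsub) := fun x =>
  decidable_of_iff (∃ c : ZMod 2, c • allOnes = x) Submodule.mem_span_singleton.symm

instance : DecidableEq Zq := fun x y =>
  Quotient.recOnSubsingleton₂ x y fun _ _ => decidable_of_iff _ (Submodule.Quotient.eq Lsub).symm

instance : Fintype Zq :=
  Fintype.ofSurjective (Submodule.Quotient.mk (p := Lsub)) (Submodule.Quotient.mk_surjective _)

def symplecticFamily : Fin 2 ⊕ Fin 2 → Zq :=
  Sum.elim ![pairClass 0 1, pairClass 3 4] ![pairClass 1 2, pairClass 4 5]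

lemma linearIndependent_symplecticFamily : LinearIndependent (ZMod 2) symplecticFamily :=
  Fintype.linearIndependent_iff.mpr (by decide)

lemma exists_sum_smul_symplecticFamily_eq :
    ∀ z : Zq, ∃ c : Fin 2 ⊕ Fin 2 → ZMod 2, ∑ i, c i • symplecticFamily i = z := by
  decide

noncomputable def symplecticBasis : Module.Basis (Fin 2 ⊕ Fin 2) (ZMod 2) Zq :=
  .mk linearIndependent_symplecticFamily fun z _ =>
    (Submodule.mem_span_range_iff_exists_fun _).mpr (exists_sum_smul_symplecticFamily_eq z)

def IsPermutationAction (φ : Equiv.Perm (Fin 6) →* (Zq ≃ₗ[ZMod 2] Zq)) : Prop :=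
  ∀ (g : Equiv.Perm (Fin 6)) (x : Fin 6 → ZMod 2) (hx : x ∈ U0),
    φ g (Submodule.Quotient.mk ⟨x, hx⟩) =
      Submodule.Quotient.mk ⟨fun i => x (g⁻¹ i), perm_mem g hx⟩

def IsInducedDotProduct (B : LinearMap.BilinForm (ZMod 2) Zq) : Prop :=
  ∀ x y : U0, B (Submodule.Quotient.mk x) (Submodule.Quotient.mk y)
    = ∑ i, (x : Fin 6 → ZMod 2) i * (y : Fin 6 → ZMod 2) i

namespace IsPermutationAction

variable {φ : Equiv.Perm (Fin 6) →* (Zq ≃ₗ[ZMod 2] Zq)}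

lemma apply_pairClass (hφ : IsPermutationAction φ) (g : Equiv.Perm (Fin 6)) (a b : Fin 6) :
    φ g (pairClass a b) = pairClass (g a) (g b) := by
  rw [pairClass, hφ]
  simp only [pairVec_comp_perm]
  rfl

lemma injective (hφ : IsPermutationAction φ) : Function.Injective φ := by
  refine (injective_iff_map_eq_one φ).mpr fun g hg =>
    eq_one_of_forall_pairClass_eq g fun a b => ?_
  rw [← hφ.apply_pairClass, hg, LinearEquiv.coe_one, id_eq]

lemma isOrthogonal (hφ : IsPermutationAction φ) {B : LinearMap.BilinForm (ZMod 2) Zq}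
    (hB : IsInducedDotProduct B) (g : Equiv.Perm (Fin 6)) : B.IsOrthogonal (φ g) := by
  intro z w
  induction z using Submodule.Quotient.induction_on with | _ x
  induction w using Submodule.Quotient.induction_on with | _ y
  rw [hφ, hφ, hB, hB]
  exact Equiv.sum_comp g⁻¹ fun i => (x : Fin 6 → ZMod 2) i * (y : Fin 6 → ZMod 2) i

end IsPermutationAction

namespace IsInducedDotProduct

variable {B : LinearMap.BilinForm (ZMod 2) Zq}

lemma apply_pairClass (hB : IsInducedDotProduct B) (a b c d : Fin 6) :
    B (pairClass a b) (pairClass c d) = ∑ i, pairVec a b i * pairVec c d i :=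
  hB _ _

lemma toMatrix₂_symplecticBasis (hB : IsInducedDotProduct B) :
    LinearMap.toMatrix₂ symplecticBasis symplecticBasis B = J (Fin 2) (ZMod 2) := by
  ext i j
  rw [LinearMap.toMatrix₂_apply, symplecticBasis, Module.Basis.mk_apply, Module.Basis.mk_apply]
  revert i j
  simp only [Sum.forall, Fin.forall_fin_two, symplecticFamily, Sum.elim_inl, Sum.elim_inr,
    Matrix.cons_val_zero, Matrix.cons_val_one, hB.apply_pairClass]
  decide

end IsInducedDotProduct

/-- The symplectic group `Sp₄(F₂)` has order `720`, and the homomorphism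
`S₆ → Sp₄(F₂)` induced from the permutation action on the quotient `Z = U⁰/L` of
`F₂⁶` is an isomorphism: it is injective and its image is exactly the group of
linear automorphisms of `Z` preserving the induced symplectic form. -/
theorem stmt_10 :
    Nat.card (Matrix.symplecticGroup (Fin 2) (ZMod 2)) = 720 ∧
    ∀ φ : Equiv.Perm (Fin 6) →* (Zq ≃ₗ[ZMod 2] Zq),
      (∀ (g : Equiv.Perm (Fin 6)) (x : Fin 6 → ZMod 2) (hx : x ∈ U0),
        φ g (Submodule.Quotient.mk ⟨x, hx⟩)
          = Submodule.Quotient.mk ⟨fun i => x (g⁻¹ i), perm_mem g hx⟩) →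
      ∀ B : Zq →ₗ[ZMod 2] Zq →ₗ[ZMod 2] ZMod 2,
        (∀ x y : U0, B (Submodule.Quotient.mk x) (Submodule.Quotient.mk y)
            = ∑ i, (x : Fin 6 → ZMod 2) i * (y : Fin 6 → ZMod 2) i) →
        Function.Injective φ ∧
        Set.range φ = {f : Zq ≃ₗ[ZMod 2] Zq | ∀ z w : Zq, B (f z) (f w) = B z w} := by
  refine ⟨card_symplecticGroup_fin_two_zmod_two, fun φ hφ B hB => ?_⟩
  have hinj : Function.Injective φ := IsPermutationAction.injective hφ
  have : Finite (Zq ≃ₗ[ZMod 2] Zq) := Finite.of_injective _ DFunLike.coe_injective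
  refine ⟨hinj, Set.eq_of_subset_of_ncard_le ?_ ?_⟩
  · rintro _ ⟨g, rfl⟩
    exact IsPermutationAction.isOrthogonal hφ hB g
  · calc Set.ncard {f : Zq ≃ₗ[ZMod 2] Zq | B.IsOrthogonal f}
        ≤ Nat.card (symplecticGroup (Fin 2) (ZMod 2)) :=
          (Nat.card_coe_set_eq _).symm.trans_le <| card_isOrthogonal_le_card_symplecticGroup
            (IsInducedDotProduct.toMatrix₂_symplecticBasis hB)
      _ = (Set.range φ).ncard := by
        rw [card_symplecticGroup_fin_two_zmod_two, Set.ncard_range_of_injective hinj, Nat.card_perm,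
          Nat.card_fin]
        rfl
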